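/- arXiv:2211.02653 — 2 statements merged into one kernel-verified Lean document; each statement's English description precedes it below -/
import Mathlib

section
/- Let x ∈ ℝⁿ and T ∈ ℝ, and define the Hopfield parameters W = −(1/2) x xᵀ and θ = (1/2)(x xᵀ 1 − 2T x), where 1 is the all-ones vector. Then for every s ∈ {−1,1}ⁿ, with z = (1/2)(s + 1) ∈ {0,1}ⁿ, the Hopfield energy E(s) = −(1/2) sᵀ W s + ⟨θ, s⟩ satisfies E(s) = (⟨x, z⟩ − T)² − (1/4)(⟨x, 1⟩ − 2T)². -/
/-- With Hopfield parameters `W = -(1/2) x xᵀ` and `θ = (1/2)(x xᵀ 1 - 2 T x)`,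
for every bipolar `s` and `z = (s + 1)/2` the Hopfield energy satisfies
`E(s) = (⟨x,z⟩ - T)² - (1/4)(⟨x,1⟩ - 2T)²`. -/
theorem hopfield_energy_eq_subset_sum_error (n : ℕ) (x : Fin n → ℝ) (T : ℝ)
    (W : Matrix (Fin n) (Fin n) ℝ) (θ : Fin n → ℝ)
    (hW : ∀ i j, W i j = -(1 / 2) * (x i * x j))
    (hθ : ∀ i, θ i = (1 / 2) * ((∑ j, x i * x j * 1) - 2 * T * x i))
    (s : Fin n → ℝ) (hs : ∀ i, s i = -1 ∨ s i = 1)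
    (z : Fin n → ℝ) (hz : ∀ i, z i = (1 / 2) * (s i + 1)) :
    -(1 / 2) * (∑ a, ∑ b, s a * W a b * s b) + (∑ a, θ a * s a) =
      ((∑ i, x i * z i) - T) ^ 2 - (1 / 4) * ((∑ i, x i * 1) - 2 * T) ^ 2 := by
  set S : ℝ := ∑ i, x i * s i with hSdef
  set X : ℝ := ∑ i, x i with hXdef
  have h1 : (∑ a, ∑ b, s a * W a b * s b) = -(1/2) * (S * S) := by
    rw [hSdef, Finset.sum_mul_sum, Finset.mul_sum]
    apply Finset.sum_congr rfl; intro a _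
    rw [Finset.mul_sum]
    apply Finset.sum_congr rfl; intro b _
    rw [hW]; ring
  have h2 : (∑ a, θ a * s a) = ((1/2) * X - T) * S := by
    rw [hSdef, Finset.mul_sum]
    apply Finset.sum_congr rfl; intro a _
    rw [hθ]
    have : (∑ j, x a * x j * 1) = x a * X := by
      rw [hXdef, Finset.mul_sum]
      exact Finset.sum_congr rfl fun j _ => by ring
    rw [this]; ring
  have h3 : (∑ i, x i * z i) = (1/2) * (S + X) := by
    rw [hSdef, hXdef, mul_add, Finset.mul_sum, Finset.mul_sum, ← Finset.sum_add_distrib]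
    apply Finset.sum_congr rfl; intro i _
    rw [hz]; ring
  have h4 : (∑ i, x i * 1) = X := by
    rw [hXdef]; exact Finset.sum_congr rfl fun i _ => mul_one _
  rw [h1, h2, h3, h4]; ring
end

section
/- Let x ∈ ℤⁿ and T ∈ ℤ, and define W = −(1/2) x xᵀ, θ = (1/2)(x xᵀ 1 − 2T x), and the Hopfield energy E(s) = −(1/2) sᵀ W s + ⟨θ, s⟩ on {−1,1}ⁿ. Then for s ∈ {−1,1}ⁿ, the subset {i : s_i = 1} satisfies Σ_{i : s_i = 1} x_i = T if and only if E(s) = −(1/4)(⟨x, 1⟩ − 2T)². In particular, if some subset of the entries of x sums to T, the global minimum of E over {−1,1}ⁿ is −(1/4)(⟨x, 1⟩ − 2T)² and its minimizers are exactly the indicator states of subsets summing to T. -/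
open scoped Classical

/-- Subset sum solutions are exactly the Hopfield energy minimizers: with
`W = -(1/2) x xᵀ` and `θ = (1/2)(x xᵀ 1 - 2 T x)` for integer data `x`, `T`,
a bipolar state `s` encodes a subset `{i : s i = 1}` summing to `T` iff its
Hopfield energy equals `-(1/4)(⟨x,1⟩ - 2T)²`; and if some subset sums to `T`,
this value is the global minimum of the energy over `{-1,1}ⁿ` (so the
minimizers are exactly the indicator states of subsets summing to `T`). -/
theorem hopfield_minimizers_are_subset_sum_solutions (n : ℕ)
    (x : Fin n → ℤ) (T : ℤ)
    (W : Matrix (Fin n) (Fin n) ℝ) (θ : Fin n → ℝ)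
    (hW : ∀ i j, W i j = -(1 / 2) * ((x i : ℝ) * (x j : ℝ)))
    (hθ : ∀ i, θ i = (1 / 2) * ((∑ j, (x i : ℝ) * (x j : ℝ) * 1) - 2 * (T : ℝ) * (x i : ℝ))) :
    (∀ s : Fin n → ℝ, (∀ i, s i = -1 ∨ s i = 1) →
      ((∑ i, if s i = 1 then x i else 0) = T ↔
        -(1 / 2) * (∑ a, ∑ b, s a * W a b * s b) + (∑ a, θ a * s a) =
          -(1 / 4) * ((∑ i, (x i : ℝ) * 1) - 2 * (T : ℝ)) ^ 2)) ∧
    ((∃ s₀ : Fin n → ℝ, (∀ i, s₀ i = -1 ∨ s₀ i = 1) ∧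
        (∑ i, if s₀ i = 1 then x i else 0) = T) →
      ∀ s : Fin n → ℝ, (∀ i, s i = -1 ∨ s i = 1) →
        -(1 / 4) * ((∑ i, (x i : ℝ) * 1) - 2 * (T : ℝ)) ^ 2 ≤
          -(1 / 2) * (∑ a, ∑ b, s a * W a b * s b) + (∑ a, θ a * s a)) := by
  have key : ∀ s : Fin n → ℝ,
      -(1 / 2) * (∑ a, ∑ b, s a * W a b * s b) + (∑ a, θ a * s a) =
        (1/4) * ((∑ i, (x i : ℝ) * s i) + (∑ i, (x i : ℝ)) - 2*(T:ℝ))^2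
          - (1/4) * ((∑ i, (x i : ℝ)) - 2*(T:ℝ))^2 := by
    intro s
    have h1 : (∑ a, ∑ b, s a * W a b * s b)
        = -(1/2) * ((∑ i, (x i : ℝ) * s i) * (∑ i, (x i : ℝ) * s i)) := by
      have e : ∀ a b : Fin n, s a * W a b * s b
          = -(1/2) * (((x a : ℝ) * s a) * ((x b : ℝ) * s b)) := by
        intro a b; rw [hW]; ring
      simp_rw [e, ← Finset.mul_sum]
      rw [← Finset.sum_mul]
    have h2 : (∑ a, θ a * s a)
        = (1/2) * ((∑ i, (x i : ℝ) * s i) * (∑ i, (x i : ℝ)))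
          - (T:ℝ) * (∑ i, (x i : ℝ) * s i) := by
      have e : ∀ a : Fin n, θ a * s a
          = (1/2) * (((x a : ℝ) * s a) * (∑ i, (x i : ℝ)))
            - (T:ℝ) * ((x a : ℝ) * s a) := by
        intro a
        rw [hθ]
        have : (∑ j, (x a : ℝ) * (x j : ℝ) * 1) = (x a : ℝ) * (∑ i, (x i : ℝ)) := by
          simp [Finset.mul_sum]
        rw [this]; ring
      simp_rw [e]
      rw [Finset.sum_sub_distrib]
      congr 1
      · rw [← Finset.mul_sum, ← Finset.sum_mul]
      · rw [← Finset.mul_sum]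
    rw [h1, h2]; ring
  have hone : (∑ i, (x i : ℝ) * 1) = ∑ i, (x i : ℝ) := by simp
  have hsub : ∀ s : Fin n → ℝ, (∀ i, s i = -1 ∨ s i = 1) →
      ((∑ i, if s i = 1 then x i else 0 : ℤ) : ℝ)
        = ((∑ i, (x i : ℝ) * s i) + (∑ i, (x i : ℝ))) / 2 := by
    intro s hs
    push_cast
    rw [← Finset.sum_add_distrib, Finset.sum_div]
    refine Finset.sum_congr rfl (fun i _ => ?_)
    rcases hs i with h | h <;> rw [h] <;> norm_num
  constructor
  · intro s hs
    have hcast : (∑ i, if s i = 1 then x i else 0) = T ↔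
        ((∑ i, (x i : ℝ) * s i) + (∑ i, (x i : ℝ))) / 2 = (T:ℝ) := by
      rw [← hsub s hs]; exact_mod_cast Iff.rfl
    rw [key s, hone, hcast]
    constructor
    · intro h
      have : (∑ i, (x i : ℝ) * s i) + (∑ i, (x i : ℝ)) - 2*(T:ℝ) = 0 := by linarith
      rw [this]; ring
    · intro h
      have h0 : ((∑ i, (x i : ℝ) * s i) + (∑ i, (x i : ℝ)) - 2*(T:ℝ))^2 = 0 := by nlinarith
      have := pow_eq_zero_iff (n := 2) (by norm_num) |>.mp h0
      linarith
  · intro _ s _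
    rw [key s, hone]
    nlinarith [sq_nonneg ((∑ i, (x i : ℝ) * s i) + (∑ i, (x i : ℝ)) - 2*(T:ℝ))]
end
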